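/- arXiv:1604.04141 — 4 statements merged into one kernel-verified Lean document; each statement's English description precedes it below -/
import Mathlib

section
/- Let A and B be n×n complex positive semidefinite matrices. Then det(A² + |AB|²) ≥ det(A² + A²B²), i.e., det(A² + BA²B) ≥ det(A² + A²B²). -/
open scoped ComplexOrder Matrix Classical

/-- The positive semidefinite square root of a positive semidefinite matrix
(junk value `0` if the matrix is not positive semidefinite). -/
noncomputable def sqrtm {n : ℕ} (A : Matrix (Fin n) (Fin n) ℂ) : Matrix (Fin n) (Fin n) ℂ :=
  if h : A.PosSemidef then
    (h.1.eigenvectorUnitary : Matrix (Fin n) (Fin n) ℂ) *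
      Matrix.diagonal ((↑) ∘ Real.sqrt ∘ h.1.eigenvalues) *
      (star h.1.eigenvectorUnitary : Matrix (Fin n) (Fin n) ℂ) else 0

/-- The absolute value `|X| = (Xᴴ X)^{1/2}` of a matrix. -/
noncomputable def absm {n : ℕ} (X : Matrix (Fin n) (Fin n) ℂ) : Matrix (Fin n) (Fin n) ℂ :=
  sqrtm (Xᴴ * X)

/-!
Write `T = A²`, so that `|AB|² = BTB`. With `C = 1 + iB` one has `CᴴC = CCᴴ = 1 + B²`, hence
`X = CᴴTC` and `Y = CTCᴴ` are positive semidefinite with `det X = det Y = det (T + TB²)`, while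
`X + Y = 2 (T + BTB)`. The AM–GM form `4ⁿ det X det Y ≤ det (X + Y)²` of Minkowski's determinant
inequality therefore gives `det (T + TB²)² ≤ det (T + BTB)²`. That inequality follows by writing
`X = RᴴR` and `Y = RᴴZR`, which reduces it to `4ⁿ det Z ≤ det (1 + Z)²`, i.e. to `4λ ≤ (1 + λ)²` for
the eigenvalues `λ ≥ 0` of `Z`.
-/

open Matrix

open scoped MatrixOrder in
lemma sqrtm_eq_cfcSqrt {n : ℕ} {M : Matrix (Fin n) (Fin n) ℂ} (hM : M.PosSemidef) :
    sqrtm M = CFC.sqrt M := by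
  rw [sqrtm, dif_pos hM, CFC.sqrt_eq_real_sqrt M hM.nonneg, cfcₙ_eq_cfc, hM.1.cfc_eq,
    IsHermitian.cfc, Unitary.conjStarAlgAut_apply]
  rfl

open scoped MatrixOrder in
lemma absm_sq {n : ℕ} (X : Matrix (Fin n) (Fin n) ℂ) : absm X ^ 2 = Xᴴ * X := by
  rw [absm, sqrtm_eq_cfcSqrt (posSemidef_conjTranspose_mul_self X),
    CFC.sq_sqrt _ (posSemidef_conjTranspose_mul_self X).nonneg]

lemma RCLike.le_of_sq_le_sq {𝕜 : Type*} [RCLike 𝕜] {a b : 𝕜} (ha : 0 ≤ a) (hb : 0 ≤ b)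
    (h : a ^ 2 ≤ b ^ 2) : a ≤ b := by
  obtain ⟨x, hx, rfl⟩ := RCLike.nonneg_iff_exists_ofReal.mp ha
  obtain ⟨y, hy, rfl⟩ := RCLike.nonneg_iff_exists_ofReal.mp hb
  rw [← RCLike.ofReal_pow, ← RCLike.ofReal_pow, RCLike.ofReal_le_ofReal] at h
  exact RCLike.ofReal_le_ofReal.mpr ((pow_le_pow_iff_left₀ hx hy two_ne_zero).mp h)

lemma Finset.four_pow_card_mul_prod_le_prod_one_add_sq {ι : Type*} (s : Finset ι) {μ : ι → ℝ}
    (hμ : ∀ i ∈ s, 0 ≤ μ i) : 4 ^ s.card * ∏ i ∈ s, μ i ≤ (∏ i ∈ s, (1 + μ i)) ^ 2 := by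
  rw [← Finset.prod_const, ← Finset.prod_mul_distrib, ← Finset.prod_pow]
  exact Finset.prod_le_prod (fun i hi => by linarith [hμ i hi])
    fun i _ => by nlinarith [sq_nonneg (1 - μ i)]

section Minkowski

variable {m 𝕜 : Type*} [Fintype m] [DecidableEq m] [RCLike 𝕜]

lemma Matrix.IsHermitian.det_one_add {Z : Matrix m m 𝕜} (hZ : Z.IsHermitian) :
    (1 + Z).det = ∏ i, (1 + (hZ.eigenvalues i : 𝕜)) := by
  have : 1 + Z = cfc (fun x : ℝ => 1 + x) Z := by
    rw [cfc_add .., cfc_const_one .., cfc_id' ..]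
  rw [this, hZ.cfc_eq, IsHermitian.cfc]
  simp [-Unitary.conjStarAlgAut_apply]

lemma Matrix.PosSemidef.four_pow_card_mul_det_le_det_one_add_sq {Z : Matrix m m 𝕜}
    (hZ : Z.PosSemidef) : 4 ^ Fintype.card m * Z.det ≤ (1 + Z).det ^ 2 := by
  rw [hZ.1.det_one_add, hZ.1.det_eq_prod_eigenvalues]
  exact_mod_cast Finset.univ.four_pow_card_mul_prod_le_prod_one_add_sq
    fun i _ => hZ.eigenvalues_nonneg i

open scoped MatrixOrder in
lemma Matrix.PosSemidef.four_pow_card_mul_det_mul_det_le_det_add_sq {X Y : Matrix m m 𝕜}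
    (hX : X.PosSemidef) (hY : Y.PosSemidef) :
    4 ^ Fintype.card m * X.det * Y.det ≤ (X + Y).det ^ 2 := by
  by_cases hXdet : X.det = 0
  · rw [hXdet, mul_zero, zero_mul]
    exact pow_nonneg (hX.add hY).det_nonneg 2
  obtain ⟨R, rfl⟩ := CStarAlgebra.nonneg_iff_eq_star_mul_self.mp hX.nonneg
  have hRdet : IsUnit R.det := by
    refine isUnit_iff_ne_zero.mpr fun h => hXdet ?_
    rw [det_mul, h, mul_zero]
  set Z := star R⁻¹ * Y * R⁻¹ with hZ_def
  have hZ : Z.PosSemidef := hY.conjTranspose_mul_mul_same R⁻¹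
  have hY_eq : Y = star R * Z * R := by
    simp only [hZ_def, ← Matrix.mul_assoc, ← star_mul, nonsing_inv_mul _ hRdet, star_one,
      Matrix.one_mul]
    rw [Matrix.mul_assoc, nonsing_inv_mul _ hRdet, Matrix.mul_one]
  have hsum : star R * R + Y = star R * (1 + Z) * R := by
    rw [hY_eq, Matrix.mul_add, Matrix.add_mul, Matrix.mul_one]
  rw [hsum, hY_eq]
  simp only [det_mul]
  calc 4 ^ Fintype.card m * ((star R).det * R.det) * ((star R).det * Z.det * R.det)
      = ((star R).det * R.det) ^ 2 * (4 ^ Fintype.card m * Z.det) := by ring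
    _ ≤ ((star R).det * R.det) ^ 2 * (1 + Z).det ^ 2 := by
      gcongr
      · exact pow_nonneg (det_mul (star R) R ▸ hX.det_nonneg) 2
      · exact hZ.four_pow_card_mul_det_le_det_one_add_sq
    _ = ((star R).det * (1 + Z).det * R.det) ^ 2 := by ring

end Minkowski

lemma Matrix.IsHermitian.conjTranspose_one_add_I_smul {m : Type*} [DecidableEq m]
    {B : Matrix m m ℂ} (hB : B.IsHermitian) : (1 + Complex.I • B)ᴴ = 1 - Complex.I • B := by
  rw [conjTranspose_add, conjTranspose_one, conjTranspose_smul, hB.eq, Complex.star_def,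
    Complex.conj_I, neg_smul, sub_eq_add_neg]

section OneAddISMul

variable {m : Type*} [Fintype m] [DecidableEq m] (T B : Matrix m m ℂ)

lemma one_sub_I_smul_mul_one_add_I_smul :
    (1 - Complex.I • B) * (1 + Complex.I • B) = 1 + B ^ 2 := by
  simp only [sub_mul, mul_add, one_mul, mul_one, smul_mul_smul_comm, Complex.I_mul_I, sq]
  module

lemma one_add_I_smul_mul_one_sub_I_smul :
    (1 + Complex.I • B) * (1 - Complex.I • B) = 1 + B ^ 2 := by
  simp only [mul_sub, add_mul, one_mul, mul_one, smul_mul_smul_comm, Complex.I_mul_I, sq]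
  module

lemma one_sub_I_smul_mul_mul_one_add_I_smul_add :
    (1 - Complex.I • B) * T * (1 + Complex.I • B) + (1 + Complex.I • B) * T * (1 - Complex.I • B)
      = (2 : ℂ) • (T + B * T * B) := by
  simp only [mul_sub, sub_mul, mul_add, add_mul, smul_mul_assoc, mul_smul_comm, one_mul, mul_one]
  linear_combination (norm := module) (-2 * Complex.I_sq) • (B * T * B)

end OneAddISMul

theorem Matrix.PosSemidef.det_add_mul_sq_le_det_add_mul_mul {m : Type*} [Fintype m]
    [DecidableEq m] {T B : Matrix m m ℂ} (hT : T.PosSemidef) (hB : B.IsHermitian) :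
    (T + T * B ^ 2).det ≤ (T + B * T * B).det := by
  set C : Matrix m m ℂ := 1 + Complex.I • B
  have hCH : Cᴴ = 1 - Complex.I • B := hB.conjTranspose_one_add_I_smul
  have hX : (Cᴴ * T * C).PosSemidef := hT.conjTranspose_mul_mul_same C
  have hY : (C * T * Cᴴ).PosSemidef := hT.mul_mul_conjTranspose_same C
  have hXdet : (Cᴴ * T * C).det = (T + T * B ^ 2).det := by
    rw [det_mul, det_mul, mul_right_comm, ← det_mul, hCH, one_sub_I_smul_mul_one_add_I_smul,
      mul_comm, ← det_mul, Matrix.mul_add, Matrix.mul_one]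
  have hYdet : (C * T * Cᴴ).det = (T + T * B ^ 2).det := by
    rw [det_mul, det_mul, mul_right_comm, ← det_mul, hCH, one_add_I_smul_mul_one_sub_I_smul,
      mul_comm, ← det_mul, Matrix.mul_add, Matrix.mul_one]
  have hsum : Cᴴ * T * C + C * T * Cᴴ = (2 : ℂ) • (T + B * T * B) := by
    rw [hCH]; exact one_sub_I_smul_mul_mul_one_add_I_smul_add T B
  have hBTB : (B * T * B).PosSemidef := by
    simpa only [hB.eq] using hT.conjTranspose_mul_mul_same B
  have key := hX.four_pow_card_mul_det_mul_det_le_det_add_sq hY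
  rw [hXdet, hYdet, hsum, det_smul] at key
  refine RCLike.le_of_sq_le_sq (hXdet ▸ hX.det_nonneg) (hT.add hBTB).det_nonneg ?_
  refine le_of_mul_le_mul_left ?_ (pow_pos (by norm_num : (0 : ℂ) < 4) (Fintype.card m))
  have h4 : ((2 : ℂ) ^ Fintype.card m) ^ 2 = 4 ^ Fintype.card m := by
    rw [← pow_mul, mul_comm, pow_mul]; norm_num
  linear_combination key + (T + B * T * B).det ^ 2 * h4

/-- For positive semidefinite `A, B`, `det(A² + |AB|²) ≥ det(A² + A²B²)`,
where `|AB|² = B A² B`. -/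
theorem det_sq_add_sq_mul_sq_le {n : ℕ} (A B : Matrix (Fin n) (Fin n) ℂ)
    (hA : A.PosSemidef) (hB : B.PosSemidef) :
    (A ^ 2 + A ^ 2 * B ^ 2).det ≤ (A ^ 2 + (absm (A * B)) ^ 2).det := by
  have habs : absm (A * B) ^ 2 = B * A ^ 2 * B := by
    rw [absm_sq, conjTranspose_mul, hA.1.eq, hB.1.eq, sq]
    simp only [Matrix.mul_assoc]
  rw [habs]
  exact (hA.pow 2).det_add_mul_sq_le_det_add_mul_mul hB.1
end

section
/- Let X and Y be n×n complex matrices whose eigenvalues are all real and nonnegative. If the eigenvalue vector of X (sorted in descending order) weakly log-majorizes the eigenvalue vector of Y, then det(I + X) ≥ det(I + Y). -/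
/-!
Both determinants are read off the characteristic polynomials at `-1`:
`det (1 + X) = ∏ (1 + xᵢ)`. Indices with `yᵢ = 0` contribute a factor `1` on the left and are
discarded first; afterwards all `xᵢ, yᵢ` are positive. With the weights `cᵢ = yᵢ / (1 + yᵢ)`,
the quotient `(1 + xᵢ) / (1 + yᵢ)` is the convex combination `(1 - cᵢ) • 1 + cᵢ • (xᵢ / yᵢ)`,
so concavity of `log` gives `log (1 + yᵢ) - log (1 + xᵢ) ≤ cᵢ (log yᵢ - log xᵢ)`. The weights
decrease with `y` and the partial sums of `log xᵢ - log yᵢ` are nonnegative by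
log-majorization, so by Abel summation `∑ cᵢ (log xᵢ - log yᵢ) ≥ 0`.
-/

open scoped ComplexOrder Matrix

open Finset Real

theorem Finset.sum_range_mul_nonneg_of_antitone {R : Type*} [Ring R] [PartialOrder R]
    [IsOrderedRing R] {c u : ℕ → R} {n : ℕ} (hc : Antitone c) (hc0 : ∀ i, 0 ≤ c i)
    (hu : ∀ k < n, 0 ≤ ∑ i ∈ Iic k, u i) :
    0 ≤ ∑ i ∈ range n, c i * u i := by
  obtain _ | m := n
  · simp
  have hG : ∀ k ≤ m, 0 ≤ ∑ i ∈ range (k + 1), u i := fun k hk => by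
    rw [Nat.range_succ_eq_Iic]; exact hu k (Nat.lt_succ_of_le hk)
  have hparts := sum_range_by_parts c u (m + 1)
  simp only [smul_eq_mul, add_tsub_cancel_right] at hparts
  rw [hparts]
  refine sub_nonneg_of_le ((sum_nonpos fun i hi => ?_).trans
    (mul_nonneg (hc0 m) (hG m le_rfl)))
  exact mul_nonpos_of_nonpos_of_nonneg (sub_nonpos.2 (hc i.le_succ))
    (hG i (mem_range.1 hi).le)

theorem Real.log_one_add_sub_log_one_add_le {u v : ℝ} (hu : 0 < u) (hv : 0 < v) :
    log (1 + v) - log (1 + u) ≤ v / (1 + v) * (log v - log u) := by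
  have hv1 : 0 < 1 + v := by linarith
  have h := strictConcaveOn_log_Ioi.concaveOn.2 (Set.mem_Ioi.2 one_pos)
    (Set.mem_Ioi.2 (div_pos hu hv)) (div_nonneg zero_le_one hv1.le)
    (div_nonneg hv.le hv1.le) (by field_simp)
  have hmix : 1 / (1 + v) * 1 + v / (1 + v) * (u / v) = (1 + u) / (1 + v) := by
    field_simp
  simp only [smul_eq_mul, log_one, mul_zero, zero_add, hmix] at h
  rw [log_div (by linarith) hv1.ne', log_div hu.ne' hv.ne'] at h
  linarith

theorem Matrix.det_one_add_eq_prod_of_charpoly_eq {R n : Type*} [CommRing R] [Fintype n]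
    [DecidableEq n] (M : Matrix n n R) (r : n → R)
    (hM : M.charpoly = ∏ i, (Polynomial.X - Polynomial.C (r i))) :
    (1 + M).det = ∏ i, (1 + r i) := by
  calc (1 + M).det
      = (-(scalar n (-1 : R) - M)).det := by
        rw [neg_sub, map_neg, map_one, sub_neg_eq_add, add_comm]
    _ = (-1) ^ Fintype.card n * M.charpoly.eval (-1) := by rw [det_neg, eval_charpoly]
    _ = ∏ i, (1 + r i) := by
      rw [hM, Polynomial.eval_prod, ← card_univ, ← prod_const, ← prod_mul_distrib]
      refine prod_congr rfl fun i _ => ?_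
      simp only [Polynomial.eval_sub, Polynomial.eval_X, Polynomial.eval_C]
      ring

theorem prod_range_one_add_le_of_prod_Iic_le_of_pos {x y : ℕ → ℝ} {n : ℕ} (hy : Antitone y)
    (hy0 : ∀ i, 0 ≤ y i) (hxp : ∀ i < n, 0 < x i) (hyp : ∀ i < n, 0 < y i)
    (hmaj : ∀ k < n, ∏ i ∈ Iic k, y i ≤ ∏ i ∈ Iic k, x i) :
    ∏ i ∈ range n, (1 + y i) ≤ ∏ i ∈ range n, (1 + x i) := by
  have hIic {k i : ℕ} (hk : k < n) (hi : i ∈ Iic k) : i < n := (mem_Iic.1 hi).trans_lt hk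
  have hlogmaj : ∀ k < n, 0 ≤ ∑ i ∈ Iic k, (log (x i) - log (y i)) := fun k hk => by
    rw [sum_sub_distrib, ← log_prod fun i hi => (hxp i (hIic hk hi)).ne',
      ← log_prod fun i hi => (hyp i (hIic hk hi)).ne', sub_nonneg]
    exact log_le_log (prod_pos fun i hi => hyp i (hIic hk hi)) (hmaj k hk)
  have hweight : Antitone fun i => y i / (1 + y i) := fun i j hij => by
    have := hy hij
    rw [div_le_div_iff₀ (by linarith [hy0 j]) (by linarith [hy0 i])]
    linarith
  have habel := sum_range_mul_nonneg_of_antitone hweight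
    (fun i => div_nonneg (hy0 i) (by linarith [hy0 i])) hlogmaj
  have hlog : ∑ i ∈ range n, log (1 + y i) ≤ ∑ i ∈ range n, log (1 + x i) := by
    rw [← sub_nonneg, ← sum_sub_distrib]
    refine habel.trans (sum_le_sum fun i hi => ?_)
    have hi := mem_range.1 hi
    linarith [log_one_add_sub_log_one_add_le (hxp i hi) (hyp i hi)]
  have hpos {z : ℕ → ℝ} (hz : ∀ i < n, 0 < z i) : ∀ i ∈ range n, 0 < 1 + z i :=
    fun i hi => by linarith [hz i (mem_range.1 hi)]
  rwa [← log_le_log_iff (prod_pos (hpos hyp)) (prod_pos (hpos hxp)),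
    log_prod fun i hi => (hpos hyp i hi).ne', log_prod fun i hi => (hpos hxp i hi).ne']

theorem prod_range_one_add_le_of_prod_Iic_le {x y : ℕ → ℝ} {n : ℕ} (hy : Antitone y)
    (hx0 : ∀ i, 0 ≤ x i) (hy0 : ∀ i, 0 ≤ y i)
    (hmaj : ∀ k < n, ∏ i ∈ Iic k, y i ≤ ∏ i ∈ Iic k, x i) :
    ∏ i ∈ range n, (1 + y i) ≤ ∏ i ∈ range n, (1 + x i) := by
  induction n with
  | zero => simp
  | succ n ih =>
    obtain hyn | hyn := (hy0 n).eq_or_lt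
    · rw [prod_range_succ, prod_range_succ, ← hyn, add_zero, mul_one]
      exact (ih fun k hk => hmaj k (hk.trans n.lt_succ_self)).trans
        (le_mul_of_one_le_right (prod_nonneg fun i _ => by linarith [hx0 i])
          (by linarith [hx0 n]))
    · have hyp : ∀ i < n + 1, 0 < y i := fun i hi => hyn.trans_le (hy (Nat.lt_succ_iff.1 hi))
      have hxn : ∏ i ∈ Iic n, x i ≠ 0 :=
        ((prod_pos fun i hi => hyp i (Nat.lt_succ_of_le (mem_Iic.1 hi))).trans_le
          (hmaj n n.lt_succ_self)).ne'
      have hxp : ∀ i < n + 1, 0 < x i := fun i hi =>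
        (hx0 i).lt_of_ne' (prod_ne_zero_iff.1 hxn i (mem_Iic.2 (Nat.lt_succ_iff.1 hi)))
      exact prod_range_one_add_le_of_prod_Iic_le_of_pos hy hy0 hxp hyp hmaj

theorem Fin.prod_one_add_le_of_prod_Iic_le {n : ℕ} {x y : Fin n → ℝ} (hy : Antitone y)
    (hx0 : ∀ i, 0 ≤ x i) (hy0 : ∀ i, 0 ≤ y i)
    (hmaj : ∀ k : Fin n, ∏ i ∈ Iic k, y i ≤ ∏ i ∈ Iic k, x i) :
    ∏ i, (1 + y i) ≤ ∏ i, (1 + x i) := by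
  obtain _ | m := n
  · simp
  have hclamp : Monotone fun j => Fin.clamp j m := fun i j hij =>
    Fin.mk_le_mk.2 (min_le_min_right m hij)
  have hclamp_val (i : Fin (m + 1)) : Fin.clamp i m = i :=
    Fin.ext (min_eq_left (Nat.lt_succ_iff.1 i.2))
  have hext (z : Fin (m + 1) → ℝ) (k : Fin (m + 1)) :
      ∏ i ∈ Iic (k : ℕ), z (Fin.clamp i m) = ∏ i ∈ Iic k, z i := by
    rw [← Fin.map_valEmbedding_Iic, prod_map]
    simp [hclamp_val]
  have key := prod_range_one_add_le_of_prod_Iic_le (x := fun j => x (Fin.clamp j m))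
    (y := fun j => y (Fin.clamp j m)) (n := m + 1) (hy.comp_monotone hclamp)
    (fun _ => hx0 _) (fun _ => hy0 _)
    (fun k hk => (hext y ⟨k, hk⟩).trans_le ((hmaj ⟨k, hk⟩).trans_eq (hext x ⟨k, hk⟩).symm))
  simpa only [← Fin.prod_univ_eq_prod_range, hclamp_val] using key

theorem det_one_add_le_of_wlogmajorize_general {n : ℕ} (X Y : Matrix (Fin n) (Fin n) ℂ)
    (x y : Fin n → ℝ) (hy : Antitone y)
    (hx0 : ∀ i, 0 ≤ x i) (hy0 : ∀ i, 0 ≤ y i)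
    (hX : X.charpoly = ∏ i, (Polynomial.X - Polynomial.C (x i : ℂ)))
    (hY : Y.charpoly = ∏ i, (Polynomial.X - Polynomial.C (y i : ℂ)))
    (hmaj : ∀ k : Fin n, ∏ i ∈ Finset.Iic k, y i ≤ ∏ i ∈ Finset.Iic k, x i) :
    (1 + Y).det ≤ (1 + X).det := by
  rw [X.det_one_add_eq_prod_of_charpoly_eq _ hX, Y.det_one_add_eq_prod_of_charpoly_eq _ hY]
  exact_mod_cast Fin.prod_one_add_le_of_prod_Iic_le hy hx0 hy0 hmaj

/-- If the eigenvalues of `X` and `Y` are all real and nonnegative (witnessed by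
factorizations of the characteristic polynomials over descending real vectors `x`, `y`)
and `x` weakly log-majorizes `y`, then `det(I + X) ≥ det(I + Y)`. -/
theorem det_one_add_le_of_wlogmajorize {n : ℕ} (X Y : Matrix (Fin n) (Fin n) ℂ)
    (x y : Fin n → ℝ) (hx : Antitone x) (hy : Antitone y)
    (hx0 : ∀ i, 0 ≤ x i) (hy0 : ∀ i, 0 ≤ y i)
    (hX : X.charpoly = ∏ i, (Polynomial.X - Polynomial.C (x i : ℂ)))
    (hY : Y.charpoly = ∏ i, (Polynomial.X - Polynomial.C (y i : ℂ)))
    (hmaj : ∀ k : Fin n, ∏ i ∈ Finset.Iic k, y i ≤ ∏ i ∈ Finset.Iic k, x i) :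
    (1 + Y).det ≤ (1 + X).det :=
  det_one_add_le_of_wlogmajorize_general X Y x y hy hx0 hy0 hX hY hmaj
end

section
/- Let H be an n×n complex positive definite matrix and X an m×n complex matrix. Then ‖X‖² ≤ ‖H‖ · ‖XH^{-1}X*‖, where ‖·‖ denotes the spectral norm. -/
open scoped ComplexOrder Matrix

/-- The spectral norm of a (rectangular) complex matrix: the operator norm of the
induced linear map between Euclidean spaces, i.e. the largest singular value. -/
noncomputable def specNorm {m n : ℕ} (X : Matrix (Fin m) (Fin n) ℂ) : ℝ :=
  ‖LinearMap.toContinuousLinearMap (Matrix.toEuclideanLin X)‖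

/-!
Factor `H = Sᴴ S` with `S` invertible. Then `X = (X S⁻¹) S` and `X H⁻¹ Xᴴ = (X S⁻¹)(X S⁻¹)ᴴ`,
so by submultiplicativity and the C⋆-identity
`‖X‖² ≤ ‖X S⁻¹‖² ‖S‖² = ‖X H⁻¹ Xᴴ‖ ‖H‖`.
-/

open scoped Matrix.Norms.L2Operator

namespace Matrix

variable {𝕜 : Type*} [RCLike 𝕜] {m n : Type*} [Fintype m] [Fintype n] [DecidableEq m]
  [DecidableEq n]

lemma l2_opNorm_mul_conjTranspose_self (A : Matrix m n 𝕜) :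
    ‖A * Aᴴ‖ = ‖A‖ * ‖A‖ := by
  simpa [l2_opNorm_conjTranspose] using l2_opNorm_conjTranspose_mul_self Aᴴ

lemma sq_l2_opNorm_le_of_isUnit {S : Matrix n n 𝕜} (hS : IsUnit S)
    (X : Matrix m n 𝕜) :
    ‖X‖ ^ 2 ≤ ‖Sᴴ * S‖ * ‖X * (Sᴴ * S)⁻¹ * Xᴴ‖ := by
  have hS_det : IsUnit S.det := (isUnit_iff_isUnit_det S).mp hS
  have hX : X = X * S⁻¹ * S := by rw [Matrix.mul_assoc, nonsing_inv_mul S hS_det, Matrix.mul_one]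
  have hGram : X * (Sᴴ * S)⁻¹ * Xᴴ = (X * S⁻¹) * (X * S⁻¹)ᴴ := by
    rw [mul_inv_rev, conjTranspose_mul, ← conjTranspose_nonsing_inv]
    simp only [Matrix.mul_assoc]
  calc ‖X‖ ^ 2 = ‖X * S⁻¹ * S‖ ^ 2 := by rw [← hX]
    _ ≤ (‖X * S⁻¹‖ * ‖S‖) ^ 2 := by gcongr; exact l2_opNorm_mul _ _
    _ = ‖Sᴴ * S‖ * ‖X * (Sᴴ * S)⁻¹ * Xᴴ‖ := by
      rw [hGram, l2_opNorm_conjTranspose_mul_self, l2_opNorm_mul_conjTranspose_self]; ring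

open scoped MatrixOrder in
lemma PosDef.sq_l2_opNorm_le {H : Matrix n n 𝕜} (hH : H.PosDef)
    (X : Matrix m n 𝕜) :
    ‖X‖ ^ 2 ≤ ‖H‖ * ‖X * H⁻¹ * Xᴴ‖ := by
  obtain ⟨S, hS, rfl⟩ := CStarAlgebra.isStrictlyPositive_iff_eq_star_mul_self.mp
    hH.isStrictlyPositive
  exact sq_l2_opNorm_le_of_isUnit hS X

end Matrix

lemma specNorm_eq_l2_opNorm {m n : ℕ} (X : Matrix (Fin m) (Fin n) ℂ) : specNorm X = ‖X‖ :=
  (Matrix.l2_opNorm_def X).symm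

/-- If `H` is positive definite (n×n) and `X` is any m×n matrix, then
`‖X‖² ≤ ‖H‖ ⬝ ‖X H⁻¹ Xᴴ‖` for the spectral norm. -/
theorem sq_specNorm_le_specNorm_mul {m n : ℕ} (H : Matrix (Fin n) (Fin n) ℂ)
    (hH : H.PosDef) (X : Matrix (Fin m) (Fin n) ℂ) :
    specNorm X ^ 2 ≤ specNorm H * specNorm (X * H⁻¹ * Xᴴ) := by
  simpa only [specNorm_eq_l2_opNorm] using hH.sq_l2_opNorm_le X
end

section
/- Let A and B be n×n complex positive definite matrices and A♯B := A^{1/2}(A^{-1/2}BA^{-1/2})^{1/2}A^{1/2}. Then ‖A♯B‖ ≤ λ₁(A^{1/2}B^{1/2}), where ‖·‖ is the spectral norm and λ₁(A^{1/2}B^{1/2}) is the largest eigenvalue of A^{1/2}B^{1/2} (all of whose eigenvalues are real and nonnegative since A^{1/2}B^{1/2} is similar to the positive semidefinite matrix B^{1/4}A^{1/2}B^{1/4}). -/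
/-!
Write `H = A^{1/2}`, `K = B^{1/2}` and `λ = λ₁(HK)`. Since `K^{1/2} H K^{1/2}` is similar to `HK`
and positive, `K^{1/2} H K^{1/2} ≤ λ`, i.e. `H ≤ λ K⁻¹`. The square root is operator monotone, so
the positive solution `C = K ♯ H` of the Riccati equation `C K⁻¹ C = H` satisfies
`C ≤ K ♯ (λ K⁻¹) = √λ`, hence `C² ≤ λ`. Now `C H⁻¹ C = K`, so with `N = H⁻¹ C H⁻¹` we have
`H⁻¹ B H⁻¹ = N C² N ≤ λ N²`, and monotonicity of the square root once more gives
`A ♯ B = H (H⁻¹ B H⁻¹)^{1/2} H ≤ √λ H N H = √λ C ≤ λ`. For a positive matrix, `≤ λ` is the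
bound `‖·‖ ≤ λ` on the spectral norm.
-/

open scoped ComplexOrder Matrix Classical

/-- The geometric mean `A ♯ B := A^{1/2} (A^{-1/2} B A^{-1/2})^{1/2} A^{1/2}` of positive
definite matrices. -/
noncomputable def geomMean {n : ℕ} (A B : Matrix (Fin n) (Fin n) ℂ) :
    Matrix (Fin n) (Fin n) ℂ :=
  sqrtm A * sqrtm ((sqrtm A)⁻¹ * B * (sqrtm A)⁻¹) * sqrtm A

open scoped Matrix.Norms.L2Operator MatrixOrder
open CFC Ring

lemma mul_inverse_mul_eq_of_mul_inverse_mul_eq {M : Type*} [MonoidWithZero M] {a b c : M}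
    (ha : IsUnit a) (hb : IsUnit b) (h : c * a⁻¹ʳ * c = b) : c * b⁻¹ʳ * c = a := by
  have hc : IsUnit c := isUnit_iff_exists_and_exists.mpr
    ⟨⟨a⁻¹ʳ * c * b⁻¹ʳ, by rw [← mul_assoc, ← mul_assoc, h, Ring.mul_inverse_cancel _ hb]⟩,
     ⟨b⁻¹ʳ * c * a⁻¹ʳ, by
        rw [mul_assoc, mul_assoc, ← mul_assoc c, h, Ring.inverse_mul_cancel _ hb]⟩⟩
  obtain ⟨a, rfl⟩ := ha
  obtain ⟨b, rfl⟩ := hb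
  obtain ⟨c, rfl⟩ := hc
  simp only [Ring.inverse_unit, ← Units.val_mul, Units.val_inj] at h ⊢
  rw [← h]
  group

section CStarAlgebra

variable {A : Type*} [CStarAlgebra A] [PartialOrder A] [StarOrderedRing A]

lemma sqrt_conjugate_le_smul {s z : A} {l : ℝ} (hs : 0 ≤ s) (hl : 0 ≤ l)
    (hz : z ≤ algebraMap ℝ A l) : sqrt (s * z * s) ≤ √l • s := by
  have hsq : sqrt (l • (s * s)) = √l • s := by
    rw [sqrt_eq_iff _ _ (smul_nonneg hl (IsSelfAdjoint.of_nonneg hs).mul_self_nonneg)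
      (smul_nonneg (Real.sqrt_nonneg l) hs), smul_mul_smul_comm, Real.mul_self_sqrt hl]
  calc sqrt (s * z * s) ≤ sqrt (s * algebraMap ℝ A l * s) :=
        sqrt_le_sqrt _ _ (conjugate_le_conjugate_of_nonneg hz hs)
    _ = √l • s := by rw [← hsq, Algebra.algebraMap_eq_smul_one, mul_smul_one, smul_mul_assoc]

lemma smul_le_algebraMap_sq {c : A} {μ : ℝ} (hμ : 0 ≤ μ) (h : c ≤ algebraMap ℝ A μ) :
    μ • c ≤ algebraMap ℝ A (μ ^ 2) := by
  calc μ • c ≤ μ • algebraMap ℝ A μ := smul_le_smul_of_nonneg_left h hμ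
    _ = algebraMap ℝ A (μ ^ 2) := by rw [sq, map_mul, Algebra.smul_def]

lemma mul_self_le_algebraMap_sq {c : A} {μ : ℝ} (hc : 0 ≤ c) (hμ : 0 ≤ μ)
    (h : c ≤ algebraMap ℝ A μ) : c * c ≤ algebraMap ℝ A (μ ^ 2) := by
  have hsq := sqrt_mul_sqrt_self c
  calc c * c = sqrt c * sqrt c * (sqrt c * sqrt c) := by rw [hsq]
    _ = sqrt c * (sqrt c * sqrt c) * sqrt c := by simp only [mul_assoc]
    _ = sqrt c * c * sqrt c := by rw [hsq]
    _ ≤ sqrt c * algebraMap ℝ A μ * sqrt c := conjugate_le_conjugate_of_nonneg h (sqrt_nonneg c)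
    _ = μ • c := by
        rw [Algebra.algebraMap_eq_smul_one, mul_smul_one, smul_mul_assoc, sqrt_mul_sqrt_self c]
    _ ≤ algebraMap ℝ A (μ ^ 2) := smul_le_algebraMap_sq hμ h


lemma exists_riccati_solution_le {h k : A} {l : ℝ} (hh : IsStrictlyPositive h)
    (hk : IsStrictlyPositive k) (hl : 0 ≤ l) (hle : sqrt k * h * sqrt k ≤ algebraMap ℝ A l) :
    ∃ c, 0 ≤ c ∧ c ≤ algebraMap ℝ A √l ∧ c * h⁻¹ʳ * c = k := by
  set r := sqrt k
  have hr : IsSelfAdjoint r := IsSelfAdjoint.of_nonneg (sqrt_nonneg k)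
  have hk' : 0 ≤ k⁻¹ʳ := hk.ringInverse.nonneg
  have hrkr : r * k⁻¹ʳ * r = 1 := by
    simpa only [conjSqrt_one _ hk', conjSqrt_apply] using conjSqrt_conjSqrt_ringInverse k 1
  -- `k⁻¹ r = r⁻¹`, so `d = (r⁻¹ h r⁻¹)^{1/2}` and the witness `r d r` is `k ♯ h`.
  set d := sqrt (k⁻¹ʳ * (r * h * r) * k⁻¹ʳ)
  have hdd : d * d = k⁻¹ʳ * (r * h * r) * k⁻¹ʳ := sqrt_mul_sqrt_self _
    ((IsSelfAdjoint.of_nonneg hk').conjugate_nonneg (hr.conjugate_nonneg hh.nonneg))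
  refine ⟨r * d * r, hr.conjugate_nonneg (sqrt_nonneg _), ?_, ?_⟩
  · calc r * d * r ≤ r * (√l • k⁻¹ʳ) * r :=
          hr.conjugate_le_conjugate (sqrt_conjugate_le_smul hk' hl hle)
      _ = algebraMap ℝ A √l := by
          rw [mul_smul_comm, smul_mul_assoc, hrkr, Algebra.algebraMap_eq_smul_one]
  · apply mul_inverse_mul_eq_of_mul_inverse_mul_eq hk.isUnit hh.isUnit
    calc r * d * r * k⁻¹ʳ * (r * d * r) = r * d * (r * k⁻¹ʳ * r) * d * r := by
          simp only [mul_assoc]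
      _ = r * (d * d) * r := by rw [hrkr, mul_one, mul_assoc r d d]
      _ = (r * k⁻¹ʳ * r) * h * (r * k⁻¹ʳ * r) := by rw [hdd]; simp only [mul_assoc]
      _ = h := by rw [hrkr, one_mul, mul_one]

lemma conjugate_sqrt_le_of_riccati {h k c : A} {μ : ℝ} (hh : IsStrictlyPositive h) (hc : 0 ≤ c)
    (hμ : 0 ≤ μ) (hcμ : c ≤ algebraMap ℝ A μ) (hck : c * h⁻¹ʳ * c = k) :
    h * sqrt (h⁻¹ʳ * (k * k) * h⁻¹ʳ) * h ≤ algebraMap ℝ A (μ ^ 2) := by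
  set n := h⁻¹ʳ * c * h⁻¹ʳ
  have hn : 0 ≤ n := (IsSelfAdjoint.of_nonneg hh.ringInverse.nonneg).conjugate_nonneg hc
  have hkk : h⁻¹ʳ * (k * k) * h⁻¹ʳ = n * (c * c) * n := by rw [← hck]; simp only [n, mul_assoc]
  have hhn : h * n * h = c := by
    rw [show h * n * h = (h * h⁻¹ʳ) * c * (h⁻¹ʳ * h) by simp only [n, mul_assoc],
      Ring.mul_inverse_cancel _ hh.isUnit, Ring.inverse_mul_cancel _ hh.isUnit, one_mul, mul_one]
  calc h * sqrt (h⁻¹ʳ * (k * k) * h⁻¹ʳ) * h ≤ h * (√(μ ^ 2) • n) * h := by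
        rw [hkk]
        exact (IsSelfAdjoint.of_nonneg hh.nonneg).conjugate_le_conjugate
          (sqrt_conjugate_le_smul hn (sq_nonneg μ) (mul_self_le_algebraMap_sq hc hμ hcμ))
    _ = μ • c := by rw [Real.sqrt_sq hμ, mul_smul_comm, smul_mul_assoc, hhn]
    _ ≤ algebraMap ℝ A (μ ^ 2) := smul_le_algebraMap_sq hμ hcμ

lemma conjugate_sqrt_le_of_sqrt_conjugate_le {h k : A} {l : ℝ} (hh : IsStrictlyPositive h)
    (hk : IsStrictlyPositive k) (hl : 0 ≤ l) (hle : sqrt k * h * sqrt k ≤ algebraMap ℝ A l) :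
    h * sqrt (h⁻¹ʳ * (k * k) * h⁻¹ʳ) * h ≤ algebraMap ℝ A l := by
  obtain ⟨c, hc, hcl, hck⟩ := exists_riccati_solution_le hh hk hl hle
  simpa only [Real.sq_sqrt hl] using
    conjugate_sqrt_le_of_riccati hh hc (Real.sqrt_nonneg l) hcl hck

end CStarAlgebra

lemma spectrum_mul_mul_self_eq {R A : Type*} [CommSemiring R] [Ring A] [Algebra R A] {a r : A}
    (hr : IsUnit r) : spectrum R (r * a * r) = spectrum R (a * (r * r)) := by
  obtain ⟨u, rfl⟩ := hr
  rw [← spectrum.units_conjugate (u := u) (a := a * (u * u))]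
  simp [mul_assoc]

lemma Matrix.spectrum_subset_range_of_charpoly_eq_prod {ι κ K : Type*} [Fintype ι]
    [DecidableEq ι] [Fintype κ] [Field K] {M : Matrix ι ι K} {x : κ → K}
    (hx : M.charpoly = ∏ i, (Polynomial.X - Polynomial.C (x i))) :
    spectrum K M ⊆ Set.range x := by
  intro z hz
  rw [mem_spectrum_iff_isRoot_charpoly, hx, Polynomial.IsRoot, Polynomial.eval_prod,
    Finset.prod_eq_zero_iff] at hz
  obtain ⟨i, -, hi⟩ := hz
  exact ⟨i, (sub_eq_zero.mp (by simpa using hi)).symm⟩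

lemma sqrtm_eq_cfcSqrt_s13 {n : ℕ} (A : Matrix (Fin n) (Fin n) ℂ) : sqrtm A = sqrt A := by
  by_cases hA : A.PosSemidef
  · rw [sqrtm, dif_pos hA, sqrt_eq_cfc, cfc_nnreal_eq_real _ A hA.nonneg, hA.1.cfc_eq]
    simp only [Matrix.IsHermitian.cfc, Unitary.conjStarAlgAut_apply]
    congr 3
    funext i
    simp [max_eq_left (hA.eigenvalues_nonneg i)]
  · rw [sqrtm, dif_neg hA, sqrt_of_not_nonneg (by rwa [Matrix.nonneg_iff_posSemidef])]

/-- For positive definite `A, B`, `‖A ♯ B‖ ≤ λ₁(A^{1/2} B^{1/2})`: the spectral norm of the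
geometric mean is at most the largest eigenvalue of `A^{1/2} B^{1/2}` (whose eigenvalues are
all real, as witnessed by a factorization of its characteristic polynomial over a real
vector `x`; its largest eigenvalue is then `⨆ i, x i`). -/
theorem specNorm_geomMean_le_max_eigenvalue {n : ℕ}
    (A B : Matrix (Fin n) (Fin n) ℂ) (hA : A.PosDef) (hB : B.PosDef)
    (x : Fin n → ℝ)
    (hx : (sqrtm A * sqrtm B).charpoly = ∏ i, (Polynomial.X - Polynomial.C (x i : ℂ))) :
    specNorm (geomMean A B) ≤ ⨆ i, x i := by
  change ‖geomMean A B‖ ≤ _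
  obtain hn | hn := isEmpty_or_nonempty (Fin n)
  · simp [Subsingleton.elim (geomMean A B) 0]
  set H := sqrt A
  set K := sqrt B
  have hH : IsStrictlyPositive H := IsStrictlyPositive.sqrt A hA.isStrictlyPositive
  have hK : IsStrictlyPositive K := IsStrictlyPositive.sqrt B hB.isStrictlyPositive
  have hspec : spectrum ℂ (sqrt K * H * sqrt K) ⊆ Set.range (fun i ↦ (x i : ℂ)) := by
    rw [spectrum_mul_mul_self_eq (hK.isUnit_cfcSqrt K), sqrt_mul_sqrt_self K hK.nonneg]
    exact Matrix.spectrum_subset_range_of_charpoly_eq_prod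
      (by simpa only [sqrtm_eq_cfcSqrt_s13] using hx)
  have hle : sqrt K * H * sqrt K ≤ algebraMap ℝ _ (⨆ i, x i) := by
    refine le_algebraMap_of_spectrum_le fun t ht ↦ ?_
    obtain ⟨i, hi⟩ := hspec ((spectrum.algebraMap_mem_iff ℂ).mpr ht)
    have hxi : x i = t := by simpa using hi
    exact hxi ▸ le_ciSup (Set.finite_range x).bddAbove i
  have hl : 0 ≤ ⨆ i, x i :=
    spectrum_nonneg_of_nonneg (((IsSelfAdjoint.of_nonneg (sqrt_nonneg K)).conjugate_nonneg
      hH.nonneg).trans hle) (by rw [spectrum.scalar_eq]; rfl)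
  have hgm : geomMean A B = H * sqrt (H⁻¹ʳ * (K * K) * H⁻¹ʳ) * H := by
    rw [geomMean, sqrt_mul_sqrt_self B hB.posSemidef.nonneg]
    simp only [sqrtm_eq_cfcSqrt_s13, Matrix.nonsing_inv_eq_ringInverse, H]
  rw [hgm, CStarAlgebra.norm_le_iff_le_algebraMap _ hl]
  exact conjugate_sqrt_le_of_sqrt_conjugate_le hH hK hl hle
end
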